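/- The coded subshifts X_n of the full two-shift generated by W_n={0^{2^n−1}1, 1^{2^n−1}0}, n∈ℕ, are pairwise disjoint: X_n∩X_m=∅ whenever n≠m. -/

import Mathlib

open MeasureTheory Real Filter Topology

noncomputable section

namespace PhaseTransitions

/-! ### Measure-theoretic entropy and topological pressure -/

/-- Base-2 entropy of the (finite, measurable) partition of `X` induced by an
observable `f : X → F` with finitely many values. -/
def entOfObs {X F : Type*} [MeasurableSpace X] [Fintype F]
    (μ : Measure X) (f : X → F) : ℝ :=
  ∑ a : F, -((μ (f ⁻¹' {a})).toReal * Real.logb 2 (μ (f ⁻¹' {a})).toReal)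

/-- Entropy of the transformation `T` with respect to the partition induced by
the observable `f` : the limit (= infimum) of `(1/n) H(⋁_{i<n} T⁻ⁱ f)`. -/
def entObsT {X F : Type*} [MeasurableSpace X] [Fintype F]
    (T : X → X) (μ : Measure X) (f : X → F) : ℝ :=
  ⨅ n : ℕ, entOfObs μ (fun x => fun i : Fin (n + 1) => f (T^[(i : ℕ)] x)) / (n + 1)

/-- Kolmogorov–Sinai (measure-theoretic) entropy, base 2: supremum over all
finite measurable partitions (encoded by observables with values in `Fin k`). -/
def kolSinai {X : Type*} [MeasurableSpace X] (T : X → X) (μ : Measure X) : ℝ :=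
  ⨆ k : ℕ, ⨆ f : {f : X → Fin k // Measurable f}, entObsT T μ f.1

/-- `μ` is a `T`-invariant Borel probability measure. -/
def InvProb {X : Type*} [MeasurableSpace X] (T : X → X) (μ : Measure X) : Prop :=
  IsProbabilityMeasure μ ∧ MeasurePreserving T μ μ

/-- Topological pressure, via the variational principle. -/
def pressure {X : Type*} [MeasurableSpace X] (T : X → X) (φ : X → ℝ) : ℝ :=
  ⨆ μ : {μ : Measure X // InvProb T μ}, (kolSinai T μ.1 + ∫ x, φ x ∂μ.1)

/-- An equilibrium state of the potential `φ`: an invariant probability measure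
attaining the supremum in the variational principle. -/
def IsEquilibrium {X : Type*} [MeasurableSpace X] (T : X → X) (φ : X → ℝ)
    (μ : Measure X) : Prop :=
  InvProb T μ ∧ kolSinai T μ + ∫ x, φ x ∂μ = pressure T φ

/-! ### The two-sided full shift on two symbols -/

/-- The two-sided full shift space `{0,1}^ℤ`. -/
abbrev Bin : Type := ℤ → Bool

/-- The (left) shift map. -/
def shift (x : Bin) : Bin := fun n => x (n + 1)

/-- `x` is a bi-infinite free concatenation of words from `W`: there is a
bi-infinite increasing sequence of cut points, cofinal in both directions, such
that consecutive cut points delimit words of `W`. -/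
def IsFreeConcat (W : Set (List Bool)) (x : Bin) : Prop :=
  ∃ t : ℤ → ℤ, StrictMono t ∧ (∀ N : ℤ, ∃ k, N < t k) ∧ (∀ N : ℤ, ∃ k, t k < N) ∧
    ∀ k : ℤ, ∃ w ∈ W, t (k + 1) = t k + w.length ∧
      ∀ (i : ℕ) (h : i < w.length), x (t k + (i : ℤ)) = w.get ⟨i, h⟩

/-- The coded system generated by the word set `W`: the closure of the set of
free concatenations of words from `W`. -/
def codedSystem (W : Set (List Bool)) : Set Bin :=
  closure {x | IsFreeConcat W x}

/-- The generating set `W_n = {0^{2^n-1}1, 1^{2^n-1}0}`. -/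
def genWords (n : ℕ) : Set (List Bool) :=
  {List.replicate (2 ^ n - 1) false ++ [true], List.replicate (2 ^ n - 1) true ++ [false]}

/-- The subshift `X_n`, the coded system generated by `W_n`. -/
def Xsub (n : ℕ) : Set Bin := codedSystem (genWords n)

/-- The set of words of length `j` in the language of `Y ⊆ {0,1}^ℤ`. -/
def langWord (Y : Set Bin) (j : ℕ) : Set (Fin j → Bool) :=
  {w | ∃ x ∈ Y, ∀ i : Fin j, x ((i : ℕ) : ℤ) = w i}

/-! ### The metric and the potential -/

open Classical in
/-- The metric `d(x,y) = 2^{-inf{|n| : x_n ≠ y_n}}` on the shift space. -/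
def binDist (x y : Bin) : ℝ :=
  if x = y then 0
  else (1 / 2 : ℝ) ^ sInf {m : ℕ | ∃ i : ℤ, i.natAbs = m ∧ x i ≠ y i}

/-- Distance from a point to a set. -/
def distToSet (x : Bin) (S : Set Bin) : ℝ :=
  sInf ((fun y => binDist x y) '' S)

/-- `δ_j = (10 + 3 log₂ j)/(α j)`. -/
def deltaSeq (α : ℝ) (j : ℕ) : ℝ := (10 + 3 * Real.logb 2 j) / (α * j)

/-- The drop `δ` as a function of the distance `r`: if `r = 2^{-j}` this equals
`δ_j = (10 + 3 log₂ j)/(α j)`, and `δ = 0` when `r = 0` (i.e. `δ_∞ = 0`). -/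
def deltaOf (α : ℝ) (r : ℝ) : ℝ :=
  if r = 0 then 0
  else (10 + 3 * Real.logb 2 (-Real.logb 2 r)) / (α * (-Real.logb 2 r))

/-- `c_n = -∑_{j=n}^∞ 1/(2^{j+1} β_j)`. -/
def cseq (β : ℕ → ℝ) (n : ℕ) : ℝ :=
  -∑' k : ℕ, 1 / (2 ^ (n + k + 1) * β (n + k))

/-- `φ_n(x) = c_n − δ_j` when `dist(x, X_n) = 2^{-j}` (and `φ_n = c_n` on `X_n`). -/
def phiN (α : ℝ) (c : ℕ → ℝ) (n : ℕ) (x : Bin) : ℝ :=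
  c n - deltaOf α (distToSet x (Xsub n))

/-- The potential `φ = sup_{n ≥ 1} φ_n`. -/
def phi (α : ℝ) (c : ℕ → ℝ) (x : Bin) : ℝ :=
  ⨆ n : ℕ, phiN α c (n + 1) x

/-- The constants of the finite (truncated) construction:
`c_{n} = c_1 + ∑_{j=1}^{n-1} 1/(2^{j+1} β_j)`. -/
def cseqFin (c1 : ℝ) (β : ℕ → ℝ) (n : ℕ) : ℝ :=
  c1 + ∑ j ∈ Finset.Ico 1 n, 1 / (2 ^ (j + 1) * β j)

/-- The truncated potential `φ = max{φ_n : 1 ≤ n ≤ N+1}`. -/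
def phiFin (α : ℝ) (c : ℕ → ℝ) (N : ℕ) (x : Bin) : ℝ :=
  ⨆ n : Fin (N + 1), phiN α c ((n : ℕ) + 1) x

/-! ### Measures of maximal entropy and relative pressure -/

/-- `μ` is a measure of maximal entropy for the subsystem `Y` (a `T`-invariant
probability measure giving full mass to `Y` and maximizing entropy among such). -/
def IsMaxEntropyOn (Y : Set Bin) (μ : Measure Bin) : Prop :=
  InvProb shift μ ∧ μ Y = 1 ∧
    ∀ ν : Measure Bin, InvProb shift ν → ν Y = 1 → kolSinai shift ν ≤ kolSinai shift μ

/-- The topological pressure of the subsystem `Y` (computed via the variational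
principle over invariant measures giving full mass to `Y`). -/
def pressureOn (Y : Set Bin) (φ : Bin → ℝ) : ℝ :=
  ⨆ μ : {μ : Measure Bin // InvProb shift μ ∧ μ Y = 1},
    (kolSinai shift μ.1 + ∫ x, φ x ∂μ.1)

/-! ### The pin-sequence space -/

/-- `Y`, the closure of the union of the `X_n`, `n ≥ 1`. -/
def Yset : Set Bin := closure (⋃ n : ℕ, Xsub (n + 1))

/-- The word `x_i ⋯ x_j` belongs to the language of `Y`. -/
def SegIn (x : Bin) (i j : ℤ) (Y : Set Bin) : Prop :=
  ∃ y ∈ Y, ∀ m : ℤ, i ≤ m → m ≤ j → y (m - i) = x m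

/-- The word `x_0 ⋯ x_{j-1}` belongs to the language of `Y`. -/
def WordIn (x : Bin) (j : ℕ) (Y : Set Bin) : Prop :=
  ∃ y ∈ Y, ∀ m : ℕ, m < j → y (m : ℤ) = x (m : ℤ)

/-- The pin-sequence space `P ⊆ X × {0,1}^ℤ`: pinless stretches of `x` lie in the
language of `Y`, and stretches between two pins do not. -/
def PinSpace : Set (Bin × Bin) :=
  {p | (∀ i j : ℤ, i < j → (∀ k : ℤ, i < k → k ≤ j → p.2 k = false) → SegIn p.1 i j Yset) ∧
       (∀ i j : ℤ, i < j → p.2 i = true → p.2 j = true → ¬ SegIn p.1 i j Yset)}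

/-- The product shift `T̄(x,z) = (Tx, Tz)`. -/
def shift2 (p : Bin × Bin) : Bin × Bin := (shift p.1, shift p.2)

/-- The set `A = {(x,z) ∈ P : z_0 = 1}`. -/
def Aset : Set (Bin × Bin) := {p | p ∈ PinSpace ∧ p.2 0 = true}

/-- The first return time to `A`. -/
def retTime (p : Bin × Bin) : ℕ :=
  sInf {k : ℕ | 1 ≤ k ∧ shift2^[k] p ∈ Aset}

/-- The induced (first-return) map `T̄_A`. -/
def inducedMap (p : Bin × Bin) : Bin × Bin := shift2^[retTime p] p

/-- `Q_j`, the set of points of `A` with first return time `j`. -/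
def Qset (j : ℕ) : Set (Bin × Bin) := {p | p ∈ Aset ∧ retTime p = j}

/-- `Q_{j,s}` for `1 ≤ s ≤ ⌊log₂ j⌋ - 3`: points of `Q_j` whose initial block of
length `j` lies in the language of `X_s`; the class `s = 0` collects the blocks
belonging to some `X_{s'}` with `s' ≥ ⌊log₂ j⌋ - 2`. -/
def Qjs (j s : ℕ) : Set (Bin × Bin) :=
  if s = 0 then
    {p | p ∈ Qset j ∧ ∃ s' : ℕ, 1 ≤ s' ∧ Nat.log 2 j - 2 ≤ s' ∧ WordIn p.1 j (Xsub s')}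
  else {p | p ∈ Qset j ∧ WordIn p.1 j (Xsub s)}

/-! A point of `X_m` changes symbol somewhere in every `2^m` consecutive positions, since every
word of `W_m` ends in a change, while a point of `X_n` contains a constant run of length `2^n - 1`
(the first `2^n - 1` letters of a word of `W_n`). Both properties are closed, so they pass from
free concatenations to the coded systems, and for `1 ≤ m < n` they are incompatible because
`2^m ≤ 2^n - 2`. -/

lemma exists_add_mul_mem_Ico (c : ℤ) {L : ℤ} (hL : 0 < L) (i : ℤ) :
    ∃ k : ℤ, c + k * L ∈ Set.Ico i (i + L) := by
  refine ⟨-toIcoDiv hL i c, ?_⟩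
  rw [neg_mul, ← sub_eq_add_neg, ← smul_eq_mul, self_sub_toIcoDiv_zsmul]
  exact toIcoMod_mem_Ico hL i c

lemma isClosed_setOf_coord_pair (r : Bool → Bool → Prop) (p q : ℤ) :
    IsClosed {x : Bin | r (x p) (x q)} :=
  IsClosed.preimage (f := fun x : Bin => (x p, x q)) (by fun_prop)
    (isClosed_discrete {ab : Bool × Bool | r ab.1 ab.2})

lemma IsFreeConcat.exists_cuts_of_length_eq {W : Set (List Bool)} {L : ℕ}
    (hW : ∀ w ∈ W, w.length = L) {x : Bin} (hx : IsFreeConcat W x) :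
    ∃ c : ℤ, ∀ k : ℤ, ∃ w ∈ W,
      ∀ (i : ℕ) (h : i < w.length), x (c + k * L + i) = w.get ⟨i, h⟩ := by
  obtain ⟨t, -, -, -, hword⟩ := hx
  have hstep (k : ℤ) : t (k + 1) = t k + L := by
    obtain ⟨w, hw, hlen, -⟩ := hword k
    rw [hlen, hW w hw]
  have ht (k : ℤ) : t k = t 0 + k * L := by
    induction k using Int.induction_on with
    | zero => simp
    | succ k ih => rw [hstep, ih]; ring
    | pred k ih =>
      have h := hstep (-k - 1)
      rw [sub_add_cancel, ih] at h
      linarith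
  refine ⟨t 0, fun k => ?_⟩
  obtain ⟨w, hw, -, hxw⟩ := hword k
  exact ⟨w, hw, by simpa only [← ht k] using hxw⟩

lemma exists_eq_of_mem_genWords {n : ℕ} {w : List Bool} (hw : w ∈ genWords n) :
    ∃ b : Bool, w = List.replicate (2 ^ n - 1) b ++ [!b] := by
  rcases hw with rfl | rfl
  exacts [⟨false, rfl⟩, ⟨true, rfl⟩]

lemma length_of_mem_genWords {n : ℕ} {w : List Bool} (hw : w ∈ genWords n) :
    w.length = 2 ^ n := by
  obtain ⟨b, rfl⟩ := exists_eq_of_mem_genWords hw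
  simp [Nat.sub_add_cancel Nat.one_le_two_pow]

lemma IsFreeConcat.exists_genWords_blocks {n : ℕ} {x : Bin} (hx : IsFreeConcat (genWords n) x) :
    ∃ c : ℤ, ∀ k : ℤ, ∃ b : Bool,
      (∀ j : ℤ, 0 ≤ j → j < 2 ^ n - 1 → x (c + k * 2 ^ n + j) = b) ∧
        x (c + k * 2 ^ n + (2 ^ n - 1)) = !b := by
  obtain ⟨c, hc⟩ := hx.exists_cuts_of_length_eq fun _ => length_of_mem_genWords
  push_cast at hc
  refine ⟨c, fun k => ?_⟩
  obtain ⟨w, hw, hxw⟩ := hc k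
  obtain ⟨b, rfl⟩ := exists_eq_of_mem_genWords hw
  have hpow : 1 ≤ 2 ^ n := Nat.one_le_two_pow
  refine ⟨b, fun j hj0 hj => ?_, ?_⟩
  · lift j to ℕ using hj0
    have hj' : j + 1 < 2 ^ n := by exact_mod_cast (by linarith : (j : ℤ) + 1 < 2 ^ n)
    rw [hxw j (by simp; omega), List.get_eq_getElem, List.getElem_append_left (by simp; omega)]
    simp
  · have := hxw (2 ^ n - 1) (by simp)
    rw [List.get_eq_getElem, List.getElem_append_right (by simp)] at this
    simpa [Nat.cast_sub hpow] using this

def frequentChanges (L : ℤ) : Set Bin :=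
  {x | ∀ i, ∃ p ∈ Set.Ico i (i + L), x p ≠ x (p + 1)}

-- A constant run of length `L - 1`, its start confined to `[0, L)` so that the set is closed.
def longRunNearZero (L : ℤ) : Set Bin :=
  {x | ∃ i ∈ Set.Ico 0 L, ∀ p ∈ Set.Ico i (i + L - 2), x p = x (p + 1)}

lemma isClosed_frequentChanges (L : ℤ) : IsClosed (frequentChanges L) := by
  have h : frequentChanges L =
      ⋂ i, ⋃ p ∈ Set.Ico i (i + L), {x : Bin | x p ≠ x (p + 1)} := by
    ext; simp [frequentChanges]
  rw [h]
  exact isClosed_iInter fun i => (Set.finite_Ico i (i + L)).isClosed_biUnion fun p _ =>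
    isClosed_setOf_coord_pair (· ≠ ·) p (p + 1)

lemma isClosed_longRunNearZero (L : ℤ) : IsClosed (longRunNearZero L) := by
  have h : longRunNearZero L =
      ⋃ i ∈ Set.Ico 0 L, ⋂ p ∈ Set.Ico i (i + L - 2), {x : Bin | x p = x (p + 1)} := by
    ext; simp [longRunNearZero]
  rw [h]
  exact (Set.finite_Ico 0 L).isClosed_biUnion fun i _ =>
    isClosed_biInter fun p _ => isClosed_setOf_coord_pair (· = ·) p (p + 1)

lemma frequentChanges_inter_longRunNearZero {L M : ℤ} (hLM : L ≤ M - 2) :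
    frequentChanges L ∩ longRunNearZero M = ∅ := by
  refine Set.eq_empty_of_forall_notMem ?_
  rintro x ⟨hchange, i, -, hrun⟩
  obtain ⟨p, hp, hne⟩ := hchange i
  exact hne (hrun p ⟨hp.1, by linarith [hp.2]⟩)

lemma Xsub_subset_frequentChanges {n : ℕ} (hn : 1 ≤ n) :
    Xsub n ⊆ frequentChanges (2 ^ n) := by
  refine closure_minimal (fun x hx i => ?_) (isClosed_frequentChanges _)
  obtain ⟨c, hc⟩ := IsFreeConcat.exists_genWords_blocks hx
  have h2 : (2 : ℤ) ≤ 2 ^ n := le_self_pow₀ (by norm_num) (by omega)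
  obtain ⟨k, hk⟩ :=
    exists_add_mul_mem_Ico (c + (2 ^ n - 2)) (by positivity : (0 : ℤ) < 2 ^ n) i
  obtain ⟨b, hrun, hlast⟩ := hc k
  refine ⟨c + k * 2 ^ n + (2 ^ n - 2), by convert hk using 1; ring, ?_⟩
  rw [hrun _ (by linarith) (by linarith), add_assoc,
    show 2 ^ n - 2 + 1 = (2 : ℤ) ^ n - 1 by ring, hlast]
  exact (Bool.not_ne_self b).symm

lemma Xsub_subset_longRunNearZero (n : ℕ) : Xsub n ⊆ longRunNearZero (2 ^ n) := by
  refine closure_minimal (fun x hx => ?_) (isClosed_longRunNearZero _)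
  obtain ⟨c, hc⟩ := IsFreeConcat.exists_genWords_blocks hx
  obtain ⟨k, hk⟩ := exists_add_mul_mem_Ico c (by positivity : (0 : ℤ) < 2 ^ n) 0
  obtain ⟨b, hrun, -⟩ := hc k
  refine ⟨c + k * 2 ^ n, by simpa using hk, fun p ⟨hp₁, hp₂⟩ => ?_⟩
  have hx_eq_b (q : ℤ) (hq₁ : c + k * 2 ^ n ≤ q) (hq₂ : q < c + k * 2 ^ n + 2 ^ n - 1) :
      x q = b := by
    simpa using hrun (q - (c + k * 2 ^ n)) (by linarith) (by linarith)
  rw [hx_eq_b p (by linarith) (by linarith), hx_eq_b (p + 1) (by linarith) (by linarith)]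

/-- the subshifts `X_n`, `n ≥ 1`, are pairwise disjoint. -/
theorem Xsub_disjoint (m n : ℕ) (hm : 1 ≤ m) (hn : 1 ≤ n) (hmn : m ≠ n) :
    Xsub m ∩ Xsub n = ∅ := by
  wlog hlt : m < n generalizing m n
  · rw [Set.inter_comm]
    exact this n m hn hm hmn.symm (by omega)
  have hpow : (2 : ℤ) ^ m ≤ 2 ^ n - 2 := by
    have h2 : (2 : ℤ) ≤ 2 ^ m := le_self_pow₀ (by norm_num) (by omega)
    have := pow_le_pow_right₀ (by norm_num : (1 : ℤ) ≤ 2) hlt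
    rw [pow_succ] at this
    linarith
  refine Set.eq_empty_of_subset_empty ?_
  calc Xsub m ∩ Xsub n ⊆ frequentChanges (2 ^ m) ∩ longRunNearZero (2 ^ n) :=
        Set.inter_subset_inter (Xsub_subset_frequentChanges hm) (Xsub_subset_longRunNearZero n)
    _ = ∅ := frequentChanges_inter_longRunNearZero hpow

end PhaseTransitions
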